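/- arXiv:2401.04300 — 4 statements merged into one kernel-verified Lean document; each statement's English description precedes it below -/
import Mathlib

section
/- A set Y ⊆ 2^ω is Marczewski null if and only if for every perfect tree p ⊆ 2^{<ω} there is a perfect subtree q ⊆ p such that the set of branches of q meets Y in a set of cardinality strictly less than the continuum. -/
open Cardinal

abbrev Cantor : Type := ℕ → Bool

def cAdd (x y : Cantor) : Cantor := fun n => xor (x n) (y n)

def setAdd (X Y : Set Cantor) : Set Cantor := Set.image2 cAdd X Y

def IsTree (p : Set (List Bool)) : Prop := ∀ σ ∈ p, ∀ τ : List Bool, τ <+: σ → τ ∈ p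

def Splits (p : Set (List Bool)) (σ : List Bool) : Prop :=
  σ ++ [false] ∈ p ∧ σ ++ [true] ∈ p

def PerfTree (p : Set (List Bool)) : Prop :=
  p.Nonempty ∧ IsTree p ∧ ∀ σ ∈ p, ∃ τ ∈ p, σ <+: τ ∧ Splits p τ

def seg (x : Cantor) (n : ℕ) : List Bool := List.ofFn (fun i : Fin n => x i)

def body (p : Set (List Bool)) : Set Cantor := { x | ∀ n, seg x n ∈ p }

def shiftNode (t : Cantor) (σ : List Bool) : List Bool :=
  σ.mapIdx fun i b => xor b (t i)

def treeAdd (p : Set (List Bool)) (t : Cantor) : Set (List Bool) := shiftNode t '' p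

def SkewT (p : Set (List Bool)) : Prop :=
  ∀ σ ∈ p, ∀ τ ∈ p, Splits p σ → Splits p τ → σ.length = τ.length → σ = τ

def PerfectSet (P : Set Cantor) : Prop := Perfect P ∧ P.Nonempty

def MarczewskiNull (Y : Set Cantor) : Prop :=
  ∀ P : Set Cantor, PerfectSet P → ∃ Q, PerfectSet Q ∧ Q ⊆ P ∧ Q ∩ Y = ∅

def MarczewskiNullT (Y : Set Cantor) : Prop :=
  ∀ p, PerfTree p → ∃ q, PerfTree q ∧ q ⊆ p ∧ body q ∩ Y = ∅

def Shiftable (X : Set Cantor) : Prop :=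
  ∀ Y, MarczewskiNull Y → setAdd X Y ≠ Set.univ

/-! ### Auxiliary development -/

namespace Stmt1Aux

lemma splits_mem {p : Set (List Bool)} {σ : List Bool} (h : Splits p σ) (b : Bool) :
    σ ++ [b] ∈ p := by cases b <;> [exact h.1; exact h.2]

lemma seg_length (x : Cantor) (n : ℕ) : (seg x n).length = n := by simp [seg]

lemma seg_succ (x : Cantor) (n : ℕ) : seg x (n + 1) = seg x n ++ [x n] := by
  rw [seg, List.ofFn_succ']
  simp [seg, List.concat_eq_append, Fin.coe_castSucc]

lemma seg_mono (x : Cantor) {m n : ℕ} (h : m ≤ n) : seg x m <+: seg x n := by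
  induction n with
  | zero => simp_all
  | succ n ih =>
    rcases Nat.lt_or_ge m (n + 1) with h' | h'
    · exact (ih (by omega)).trans (by rw [seg_succ]; exact List.prefix_append _ _)
    · have : m = n + 1 := by omega
      subst this; exact List.prefix_refl _

lemma seg_getElem? (x : Cantor) {i n : ℕ} (h : i < n) : (seg x n)[i]? = some (x i) := by
  simp [seg, List.getElem?_ofFn, h]

/-- A node is "along" the branch `y`. -/
def Along (y : Cantor) (τ : List Bool) : Prop := seg y τ.length = τ

lemma getElem?_of_snoc_prefix {σ L : List Bool} {b : Bool} (h : σ ++ [b] <+: L) :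
    L[σ.length]? = some b := by
  obtain ⟨t, ht⟩ := h
  subst ht
  rw [List.append_assoc, List.getElem?_append_right le_rfl]
  simp

lemma getElem?_of_prefix {l L : List Bool} {i : ℕ} (h : l <+: L) (hi : i < l.length) :
    L[i]? = l[i]? := by
  obtain ⟨t, ht⟩ := h
  subst ht
  rw [List.getElem?_append_left hi]

/-- Even-part condition. -/
def EvP (w : Cantor) (z : Cantor) : Prop := ∀ k, w (2 * k) = z k

def wz (z x : Cantor) : Cantor := fun n => if n % 2 = 0 then z (n / 2) else x (n / 2)

lemma wz_evp (z x : Cantor) : EvP (wz z x) z := by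
  intro k
  simp [wz, Nat.mul_div_cancel_left k (by norm_num : 0 < 2), Nat.mul_mod_right]

lemma evp_update_odd {w z : Cantor} (hw : EvP w z) {m : ℕ} (hm : m % 2 = 1) (b : Bool) :
    EvP (Function.update w m b) z := by
  intro k
  rw [Function.update_of_ne (by omega : 2 * k ≠ m)]
  exact hw k

section Tree

variable (p : Set (List Bool)) (hp : PerfTree p)
include hp

lemma nil_mem : ([] : List Bool) ∈ p := by
  obtain ⟨σ, hσ⟩ := hp.1
  exact hp.2.1 σ hσ [] (List.nil_prefix)

open Classical in
noncomputable def sx (σ : List Bool) : List Bool :=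
  if h : σ ∈ p then Classical.choose (hp.2.2 σ h) else σ

lemma sx_spec {σ : List Bool} (h : σ ∈ p) :
    sx p hp σ ∈ p ∧ σ <+: sx p hp σ ∧ Splits p (sx p hp σ) := by
  have h' := Classical.choose_spec (hp.2.2 σ h)
  simp only [sx, dif_pos h]
  tauto

/-- The fusion nodes: `gf w n` is the `n`-th splitting node along the branch guided by `w`. -/
noncomputable def gf (w : Cantor) : ℕ → List Bool
  | 0 => sx p hp []
  | n + 1 => sx p hp (gf w n ++ [w n])

lemma gf_mem (w : Cantor) (n : ℕ) : gf p hp w n ∈ p ∧ Splits p (gf p hp w n) := by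
  induction n with
  | zero =>
    have := sx_spec p hp (nil_mem p hp)
    exact ⟨this.1, this.2.2⟩
  | succ n ih =>
    have hmem : gf p hp w n ++ [w n] ∈ p := splits_mem ih.2 (w n)
    have := sx_spec p hp hmem
    exact ⟨this.1, this.2.2⟩

lemma gf_snoc_prefix (w : Cantor) (n : ℕ) :
    gf p hp w n ++ [w n] <+: gf p hp w (n + 1) :=
  (sx_spec p hp (splits_mem (gf_mem p hp w n).2 (w n))).2.1

lemma gf_prefix_succ (w : Cantor) (n : ℕ) : gf p hp w n <+: gf p hp w (n + 1) :=
  (List.prefix_append _ _).trans (gf_snoc_prefix p hp w n)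

lemma gf_mono (w : Cantor) {m n : ℕ} (h : m ≤ n) : gf p hp w m <+: gf p hp w n := by
  induction n with
  | zero => simp_all
  | succ n ih =>
    rcases Nat.lt_or_ge m (n + 1) with h' | h'
    · exact (ih (by omega)).trans (gf_prefix_succ p hp w n)
    · have : m = n + 1 := by omega
      subst this; exact List.prefix_refl _

lemma gf_length (w : Cantor) (n : ℕ) : n ≤ (gf p hp w n).length := by
  induction n with
  | zero => exact Nat.zero_le _
  | succ n ih =>
    have h1 := (gf_snoc_prefix p hp w n).length_le
    simp at h1
    omega

lemma gf_length_succ (w : Cantor) (n : ℕ) :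
    (gf p hp w n).length < (gf p hp w (n + 1)).length := by
  have h1 := (gf_snoc_prefix p hp w n).length_le
  simp at h1
  omega

lemma gf_congr {w w' : Cantor} {n : ℕ} (h : ∀ i < n, w i = w' i) :
    gf p hp w n = gf p hp w' n := by
  induction n with
  | zero => rfl
  | succ n ih =>
    have h1 : gf p hp w n = gf p hp w' n := ih fun i hi => h i (by omega)
    show sx p hp (gf p hp w n ++ [w n]) = sx p hp (gf p hp w' n ++ [w' n])
    rw [h1, h n (by omega)]

lemma agreeG {L : List Bool} {w w' : Cantor} {n n' : ℕ}
    (h : gf p hp w n <+: L) (h' : gf p hp w' n' <+: L) :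
    ∀ k, k ≤ n → k ≤ n' → gf p hp w k = gf p hp w' k := by
  intro k
  induction k with
  | zero => intro _ _; rfl
  | succ k ih =>
    intro hk hk'
    have hG : gf p hp w k = gf p hp w' k := ih (by omega) (by omega)
    have hw : w k = w' k := by
      have e1 : L[(gf p hp w k).length]? = some (w k) :=
        getElem?_of_snoc_prefix (((gf_snoc_prefix p hp w k).trans
          (gf_mono p hp w hk)).trans h)
      have e2 : L[(gf p hp w' k).length]? = some (w' k) :=
        getElem?_of_snoc_prefix (((gf_snoc_prefix p hp w' k).trans
          (gf_mono p hp w' hk')).trans h')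
      rw [hG] at e1
      rw [e1] at e2
      exact (Option.some.injEq _ _).mp e2
    show sx p hp (gf p hp w k ++ [w k]) = sx p hp (gf p hp w' k ++ [w' k])
    rw [hG, hw]

lemma agreeW {L : List Bool} {w w' : Cantor} {n n' : ℕ}
    (h : gf p hp w n <+: L) (h' : gf p hp w' n' <+: L)
    {k : ℕ} (hk : k < n) (hk' : k < n') : w k = w' k := by
  have hG : gf p hp w k = gf p hp w' k := agreeG p hp h h' k (by omega) (by omega)
  have e1 : L[(gf p hp w k).length]? = some (w k) :=
    getElem?_of_snoc_prefix (((gf_snoc_prefix p hp w k).trans (gf_mono p hp w hk)).trans h)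
  have e2 : L[(gf p hp w' k).length]? = some (w' k) :=
    getElem?_of_snoc_prefix (((gf_snoc_prefix p hp w' k).trans (gf_mono p hp w' hk')).trans h')
  rw [hG] at e1
  rw [e1] at e2
  exact (Option.some.injEq _ _).mp e2

/-- The perfect subtree guided by `z` on even splitting levels. -/
def Q (z : Cantor) : Set (List Bool) :=
  { τ | ∃ w, EvP w z ∧ ∃ n, τ <+: gf p hp w n }

lemma Q_subset (z : Cantor) : Q p hp z ⊆ p := by
  rintro τ ⟨w, _, n, hn⟩
  exact hp.2.1 _ (gf_mem p hp w n).1 τ hn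

lemma Q_perf (z : Cantor) : PerfTree (Q p hp z) := by
  refine ⟨⟨[], wz z (fun _ => false), wz_evp z _, 0, List.nil_prefix⟩, ?_, ?_⟩
  · rintro σ ⟨w, hw, n, hn⟩ τ hτ
    exact ⟨w, hw, n, hτ.trans hn⟩
  · rintro σ ⟨w, hw, n, hn⟩
    set m := 2 * n + 1 with hm
    have hσm : σ <+: gf p hp w m := hn.trans (gf_mono p hp w (by omega))
    refine ⟨gf p hp w m, ⟨w, hw, m, List.prefix_refl _⟩, hσm, ?_⟩
    have key : ∀ b : Bool, gf p hp w m ++ [b] ∈ Q p hp z := by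
      intro b
      set wb := Function.update w m b with hwb
      have hwb_evp : EvP wb z := evp_update_odd hw (by omega) b
      have h1 : gf p hp wb m = gf p hp w m :=
        gf_congr p hp fun i hi => Function.update_of_ne (by omega) _ _
      have h2 : gf p hp wb m ++ [wb m] <+: gf p hp wb (m + 1) := gf_snoc_prefix p hp wb m
      have hwbm : wb m = b := by rw [hwb]; exact Function.update_self m b w
      rw [h1, hwbm] at h2
      exact ⟨wb, hwb_evp, m + 1, h2⟩
    exact ⟨key false, key true⟩

lemma body_along {y z : Cantor} (hy : y ∈ body (Q p hp z)) :
    ∀ k, ∃ w, EvP w z ∧ Along y (gf p hp w k) := by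
  intro k
  induction k with
  | zero =>
    set w₀ : Cantor := wz z (fun _ => false) with hw₀
    set l := (gf p hp w₀ 0).length with hl
    obtain ⟨v, hv, n, hn⟩ := hy l
    have h0 : gf p hp v 0 = gf p hp w₀ 0 := rfl
    have hpre : gf p hp w₀ 0 <+: gf p hp v n := h0 ▸ gf_mono p hp v (Nat.zero_le n)
    have : gf p hp w₀ 0 <+: seg y l :=
      List.prefix_of_prefix_length_le hpre hn (by rw [seg_length])
    refine ⟨w₀, wz_evp z _, ?_⟩
    have := this.eq_of_length (by rw [seg_length]) |>.symm
    exact this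
  | succ k ih =>
    obtain ⟨w, hw, hA⟩ := ih
    set lk := (gf p hp w k).length with hlk
    set b := y lk with hb
    set w'' := Function.update w k b with hw''
    have hw''k : gf p hp w'' k = gf p hp w k :=
      gf_congr p hp fun i hi => Function.update_of_ne (by omega) _ _
    have hw''succ : gf p hp w'' (k + 1) = sx p hp (gf p hp w k ++ [b]) := by
      show sx p hp (gf p hp w'' k ++ [w'' k]) = _
      rw [hw''k, hw'', Function.update_self]
    set m := (gf p hp w'' (k + 1)).length with hm
    have hlkm : lk < m := by
      have := gf_length_succ p hp w'' (k + 1 - 1)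
      simpa [hw''k] using this
    obtain ⟨v, hv, n₀, hn₀⟩ := hy m
    set N := max n₀ (k + 1) with hN
    have hn : seg y m <+: gf p hp v N := hn₀.trans (gf_mono p hp v (le_max_left _ _))
    -- gf w k is a prefix of seg y m
    have hwk_seg : gf p hp w k <+: seg y m := by
      have : seg y lk <+: seg y m := seg_mono y (le_of_lt hlkm)
      rwa [hA] at this
    have hwk_L : gf p hp w k <+: gf p hp v N := hwk_seg.trans hn
    have hG : gf p hp w k = gf p hp v k :=
      agreeG p hp hwk_L (List.prefix_refl _) k le_rfl (le_max_right n₀ (k+1) |>.trans' (by omega))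
    -- v k = b
    have hvk : v k = b := by
      have e1 : (gf p hp v N)[(gf p hp v k).length]? = some (v k) :=
        getElem?_of_snoc_prefix ((gf_snoc_prefix p hp v k).trans
          (gf_mono p hp v (le_trans (by omega) (le_max_right n₀ (k+1)))))
      have hlen : (gf p hp v k).length = lk := by rw [← hG]
      rw [hlen] at e1
      have e2 : (gf p hp v N)[lk]? = (seg y m)[lk]? :=
        getElem?_of_prefix hn (by rw [seg_length]; exact hlkm)
      rw [e2, seg_getElem? y hlkm] at e1
      exact ((Option.some.injEq _ _).mp e1).symm
    have hvsucc : gf p hp v (k + 1) = gf p hp w'' (k + 1) := by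
      show sx p hp (gf p hp v k ++ [v k]) = _
      rw [← hG, hvk, hw''succ]
    have hvN : gf p hp v (k + 1) <+: gf p hp v N :=
      gf_mono p hp v (le_max_right n₀ (k + 1))
    have heq : gf p hp v (k + 1) = seg y m := by
      apply (List.prefix_of_prefix_length_le hvN hn ?_).eq_of_length
      · rw [seg_length, hvsucc]
      · rw [seg_length, hvsucc]
    refine ⟨v, hv, ?_⟩
    show seg y (gf p hp v (k+1)).length = gf p hp v (k + 1)
    rw [heq, seg_length]

lemma body_disj {y z z' : Cantor} (hy : y ∈ body (Q p hp z)) (hy' : y ∈ body (Q p hp z')) :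
    z = z' := by
  funext k
  obtain ⟨w, hw, hA⟩ := body_along p hp hy (2 * k + 1)
  obtain ⟨w', hw', hA'⟩ := body_along p hp hy' (2 * k + 1)
  set l1 := (gf p hp w (2 * k + 1)).length with hl1
  set l2 := (gf p hp w' (2 * k + 1)).length with hl2
  set L := seg y (max l1 l2) with hL
  have h1 : gf p hp w (2 * k + 1) <+: L := by
    rw [← hA]; exact seg_mono y (le_max_left _ _)
  have h2 : gf p hp w' (2 * k + 1) <+: L := by
    rw [← hA']; exact seg_mono y (le_max_right _ _)
  have := agreeW p hp h1 h2 (k := 2 * k) (by omega) (by omega)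
  rw [hw k, hw' k] at this
  exact this

lemma body_Q_subset (z : Cantor) : body (Q p hp z) ⊆ body p :=
  fun x hx n => Q_subset p hp z (hx n)

lemma key (Y : Set Cantor) (hY : #(body p ∩ Y : Set Cantor) < Cardinal.continuum) :
    ∃ q, PerfTree q ∧ q ⊆ p ∧ body q ∩ Y = ∅ := by
  by_contra hcon
  push_neg at hcon
  have hne : ∀ z : Cantor, (body (Q p hp z) ∩ Y).Nonempty := by
    intro z
    exact hcon (Q p hp z) (Q_perf p hp z) (Q_subset p hp z)
  choose f hf using hne
  have hinj : Function.Injective f := by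
    intro z z' he
    have h1 := (hf z).1
    have h2 := (hf z').1
    rw [he] at h1
    exact body_disj p hp h1 h2
  have hrange : ∀ z, f z ∈ (body p ∩ Y : Set Cantor) :=
    fun z => ⟨body_Q_subset p hp z (hf z).1, (hf z).2⟩
  have : Cardinal.continuum ≤ #(body p ∩ Y : Set Cantor) := by
    have : #Cantor ≤ #(body p ∩ Y : Set Cantor) :=
      Cardinal.mk_le_of_injective (f := fun z => (⟨f z, hrange z⟩ : (body p ∩ Y : Set Cantor)))
        (fun a b hab => hinj (congrArg Subtype.val hab))
    rwa [show #Cantor = Cardinal.continuum by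
      rw [show Cantor = (ℕ → Bool) from rfl, Cardinal.mk_arrow]
      simp [Cardinal.two_power_aleph0]] at this
  exact absurd hY (not_lt.mpr this)

end Tree

end Stmt1Aux

theorem stmt1 (Y : Set Cantor) :
    MarczewskiNullT Y ↔
      ∀ p, PerfTree p → ∃ q, PerfTree q ∧ q ⊆ p ∧ #(body q ∩ Y : Set Cantor) < Cardinal.continuum := by
  constructor
  · intro h p hp
    obtain ⟨q, hq, hqp, hqe⟩ := h p hp
    refine ⟨q, hq, hqp, ?_⟩
    rw [hqe]
    simpa using Cardinal.continuum_pos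
  · intro h p hp
    obtain ⟨q, hq, hqp, hcard⟩ := h p hp
    obtain ⟨r, hr, hrq, hre⟩ := Stmt1Aux.key q hq Y hcard
    exact ⟨r, hr, hrq.trans hqp, hre⟩
end

section
/- There exists a Marczewski null subset of Cantor space of cardinality continuum. -/
open Cardinal

/-!
Marczewski's construction. Call two closed uncountable sets almost disjoint if they meet in a
countable set. Extend a family of continuum many disjoint perfect sets to a maximal almost
disjoint family `M`; as there are only `𝔠` closed sets, `#M = 𝔠`. Enumerate `M` in order type
`𝔠.ord` and pick from each member a point outside all earlier members: fewer than `𝔠` countable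
sets cannot cover a set of size `𝔠`. The resulting `Y` meets each member in fewer than `𝔠`
points. A perfect `P` has uncountable intersection with some member `Q` by maximality, and
`P ∩ Q` splits into `𝔠` disjoint perfect sets, one of which misses `Y ∩ Q` and hence `Y`.
-/

open Cardinal Set Function Topology TopologicalSpace

instance Pi.perfectSpace {ι : Type*} [Infinite ι] {X : ι → Type*} [∀ i, TopologicalSpace (X i)]
    [∀ i, Nontrivial (X i)] : PerfectSpace (∀ i, X i) := by
  classical
  refine perfectSpace_iff_forall_not_isolated.mpr fun x => ?_
  choose y hy using fun i => exists_ne (x i)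
  have hlim : Filter.Tendsto (fun j => update x j (y j)) Filter.cofinite (𝓝[≠] x) := by
    refine tendsto_nhdsWithin_iff.mpr ⟨tendsto_pi_nhds.mpr fun i => ?_, ?_⟩
    · refine tendsto_const_nhds.congr' ?_
      filter_upwards [Filter.eventually_cofinite_ne i] with j hj
      exact (update_of_ne (Ne.symm hj) _ _).symm
    · exact Filter.Eventually.of_forall fun j h => hy j (by simpa using congrFun h j)
  exact hlim.neBot

theorem Continuous.perfect_range_of_injective {β γ : Type*} [TopologicalSpace β] [CompactSpace β]
    [PerfectSpace β] [TopologicalSpace γ] [T2Space γ] {f : β → γ} (hf : Continuous f)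
    (hinj : Injective f) : Perfect (range f) := by
  refine ⟨(isCompact_range hf).isClosed, preperfect_iff_nhds.mpr ?_⟩
  rintro _ ⟨a, rfl⟩ U hU
  obtain ⟨b, ⟨hbU, -⟩, hba⟩ := preperfect_iff_nhds.mp (PerfectSpace.univ_perfect β).acc a
    trivial _ (hf.continuousAt.preimage_mem_nhds hU)
  exact ⟨f b, ⟨hbU, mem_range_self b⟩, hinj.ne hba⟩

theorem continuum_le_mk_of_injective_of_range_subset {α : Type*} {f : (ℕ → Bool) → α}
    (hf : Injective f) {C : Set α} (hfC : range f ⊆ C) : 𝔠 ≤ #C := by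
  simpa using lift_mk_le_lift_mk_of_injective (f := fun x => (⟨f x, hfC (mem_range_self x)⟩ : C))
    fun x y h => hf (congrArg Subtype.val h)

section Polish

variable {α : Type*} [TopologicalSpace α] [PolishSpace α]

theorem IsClosed.continuum_le_mk {C : Set α} (hC : IsClosed C) (hunc : ¬C.Countable) : 𝔠 ≤ #C :=
  let ⟨_, hfC, _, hf⟩ := hC.exists_nat_bool_injection_of_not_countable hunc
  continuum_le_mk_of_injective_of_range_subset hf hfC

theorem Perfect.not_countable {C : Set α} (hC : Perfect C) (hne : C.Nonempty) : ¬C.Countable := by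
  let := upgradeIsCompletelyMetrizable α
  obtain ⟨f, hfC, -, hf⟩ := hC.exists_nat_bool_injection hne
  exact fun h => (le_aleph0_iff_set_countable.mpr h).not_gt
    (aleph0_lt_continuum.trans_le (continuum_le_mk_of_injective_of_range_subset hf hfC))

theorem IsClosed.exists_perfect_disjoint_family {C : Set α} (hC : IsClosed C)
    (hunc : ¬C.Countable) : ∃ D : (ℕ → Bool) → Set α,
      (∀ z, Perfect (D z) ∧ (D z).Nonempty ∧ D z ⊆ C) ∧ Pairwise (Disjoint on D) := by
  obtain ⟨f, hfC, hf, hinj⟩ := hC.exists_nat_bool_injection_of_not_countable hunc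
  let φ : (ℕ → Bool) ≃ₜ (ℕ → Bool) × (ℕ → Bool) :=
    (Homeomorph.piCongrLeft (Y := fun _ => Bool) Equiv.natSumNatEquivNat).symm.trans
      (Homeomorph.sumPiEquivProdPi ℕ ℕ fun _ => Bool)
  let g : (ℕ → Bool) × (ℕ → Bool) → α := f ∘ φ.symm
  have hg : Continuous g := hf.comp φ.symm.continuous
  have hginj : Injective g := hinj.comp φ.symm.injective
  refine ⟨fun z => range fun x => g (z, x), fun z => ⟨?_, range_nonempty _, ?_⟩, ?_⟩
  · exact (hg.comp (Continuous.prodMk_right z)).perfect_range_of_injective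
      (hginj.comp (Prod.mk_right_injective z))
  · rintro _ ⟨x, rfl⟩
    exact hfC (mem_range_self _)
  · intro z z' hzz'
    refine disjoint_left.mpr ?_
    rintro _ ⟨x, rfl⟩ ⟨x', hx'⟩
    exact hzz' (congrArg Prod.fst (hginj hx')).symm

theorem IsClosed.exists_perfect_subset_disjoint_of_mk_lt {C S : Set α} (hC : IsClosed C)
    (hunc : ¬C.Countable) (hS : #S < 𝔠) : ∃ Q, Perfect Q ∧ Q.Nonempty ∧ Q ⊆ C ∧ Disjoint Q S := by
  obtain ⟨D, hD, hdisj⟩ := hC.exists_perfect_disjoint_family hunc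
  by_contra! h
  choose s hsD hsS using fun z => not_disjoint_iff.mp (h (D z) (hD z).1 (hD z).2.1 (hD z).2.2)
  have hinj : Injective s := fun z z' h =>
    hdisj.eq (not_disjoint_iff.mpr ⟨s z, hsD z, h ▸ hsD z'⟩)
  exact hS.not_ge (continuum_le_mk_of_injective_of_range_subset hinj (range_subset_iff.mpr hsS))

theorem exists_almostDisjoint_family_continuum_le (hα : ¬(univ : Set α).Countable) :
    ∃ M₀ : Set (Set α), 𝔠 ≤ #M₀ ∧ M₀ ⊆ {C | IsClosed C ∧ ¬C.Countable} ∧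
      M₀.Pairwise fun P Q => (P ∩ Q).Countable := by
  obtain ⟨D, hD, hdisj⟩ := isClosed_univ.exists_perfect_disjoint_family hα
  have hinj : Injective D := fun z z' h => by_contra fun hne =>
    (hD z).2.1.ne_empty (disjoint_self.mp ((hdisj hne).mono_right h.le))
  refine ⟨range D, continuum_le_mk_of_injective_of_range_subset hinj subset_rfl,
    range_subset_iff.mpr fun z => ⟨(hD z).1.closed, (hD z).1.not_countable (hD z).2.1⟩,
    Pairwise.range_pairwise fun z z' hzz' => ?_⟩
  exact show (D z ∩ D z').Countable from (hdisj hzz').inter_eq ▸ countable_empty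

end Polish

theorem mk_setOf_isClosed_le_continuum {α : Type*} [TopologicalSpace α]
    [SecondCountableTopology α] : #{C : Set α | IsClosed C} ≤ 𝔠 := by
  set B := countableBasis α
  have hB := isBasis_countableBasis α
  let Φ : {C : Set α | IsClosed C} → Set B := fun C => (↑) ⁻¹' 𝒫 (C : Set α)ᶜ
  have hΦ : Injective Φ := by
    intro C C' h
    have key : ∀ C : {C : Set α | IsClosed C}, (C : Set α)ᶜ = ⋃₀ ((↑) '' Φ C) := fun C => by
      rw [Subtype.image_preimage_coe]
      exact hB.open_eq_sUnion' C.2.isOpen_compl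
    exact Subtype.ext (compl_injective ((key C).trans (h ▸ (key C').symm)))
  calc #{C : Set α | IsClosed C} ≤ #(Set B) := mk_le_of_injective hΦ
    _ = 2 ^ #B := mk_set
    _ ≤ 2 ^ ℵ₀ := power_le_power_left two_ne_zero
      (le_aleph0_iff_set_countable.mpr (countable_countableBasis α))
    _ = 𝔠 := two_power_aleph0

section AlmostDisjoint

universe u

variable {α : Type u}

theorem exists_maximal_almostDisjoint {S M₀ : Set (Set α)} (hS : ∀ P ∈ S, ¬P.Countable)
    (hM₀S : M₀ ⊆ S) (hM₀ : M₀.Pairwise fun P Q => (P ∩ Q).Countable) :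
    ∃ M, M₀ ⊆ M ∧ M ⊆ S ∧ M.Pairwise (fun P Q => (P ∩ Q).Countable) ∧
      ∀ P ∈ S, ∃ Q ∈ M, ¬(P ∩ Q).Countable := by
  set A := {M | M ⊆ S ∧ M.Pairwise fun P Q => (P ∩ Q).Countable}
  have hchains : ∀ c ⊆ A, IsChain (· ⊆ ·) c → c.Nonempty → ∃ ub ∈ A, ∀ M ∈ c, M ⊆ ub :=
    fun c hc hchain _ => ⟨⋃₀ c, ⟨sUnion_subset fun M hM => (hc hM).1,
      hchain.pairwise_sUnion.mpr fun M hM => (hc hM).2⟩, fun _ => subset_sUnion_of_mem⟩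
  obtain ⟨M, hM₀M, hM⟩ := zorn_subset_nonempty A hchains M₀ ⟨hM₀S, hM₀⟩
  refine ⟨M, hM₀M, hM.prop.1, hM.prop.2, fun P hP => ?_⟩
  by_contra! h
  have hPM : P ∉ M := fun hPM => hS P hP (by simpa using h P hPM)
  have hins : insert P M ∈ A :=
    ⟨insert_subset hP hM.prop.1, hM.prop.2.insert fun Q hQ _ => ⟨h Q hQ, inter_comm P Q ▸ h Q hQ⟩⟩
  exact hPM ((hM.eq_of_subset hins (subset_insert P M)) ▸ mem_insert P M)

theorem exists_forall_mem_and_notMem_of_lt {ι : Type u} [LinearOrder ι] {κ : Cardinal.{u}}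
    (hκ : ℵ₀ < κ) (hι : ∀ i : ι, #(Iio i) < κ) {e : ι → Set α} (he : ∀ i, κ ≤ #(e i))
    (had : Pairwise fun i j => (e i ∩ e j).Countable) :
    ∃ y : ι → α, ∀ i, y i ∈ e i ∧ ∀ j < i, y i ∉ e j := by
  have : ∀ i, (e i \ ⋃ j : Iio i, e j ∩ e i).Nonempty := by
    intro i
    have hsmall : #(⋃ j : Iio i, e j ∩ e i : Set α) < κ :=
      calc _ ≤ #(Iio i) * ⨆ j : Iio i, #(e j ∩ e i : Set α) := mk_iUnion_le _
        _ < κ := mul_lt_of_lt hκ.le (hι i) <| (ciSup_le' fun j =>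
          le_aleph0_iff_set_countable.mpr (had (ne_of_lt j.2))).trans_lt hκ
    by_contra h
    rw [not_nonempty_iff_eq_empty, sdiff_eq_empty] at h
    exact (he i).not_gt ((mk_le_mk_of_subset h).trans_lt hsmall)
  choose y hy using this
  exact ⟨y, fun i => ⟨(hy i).1, fun j hj hyj =>
    (hy i).2 (mem_iUnion.mpr ⟨⟨j, hj⟩, hyj, (hy i).1⟩)⟩⟩

theorem exists_mk_eq_forall_mk_inter_lt {κ : Cardinal.{u}} (hκ : ℵ₀ < κ) {M : Set (Set α)}
    (hM : #M = κ) (hMκ : ∀ P ∈ M, κ ≤ #P) (had : M.Pairwise fun P Q => (P ∩ Q).Countable) :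
    ∃ Y : Set α, #Y = κ ∧ ∀ P ∈ M, #(Y ∩ P : Set α) < κ := by
  obtain ⟨e⟩ : Nonempty (κ.ord.ToType ≃ M) := by
    rw [← Cardinal.eq, hM]; simp
  have hIio : ∀ i : κ.ord.ToType, #(Iio i) < κ := fun i => by simpa using mk_Iio_lt i
  obtain ⟨y, hy⟩ := exists_forall_mem_and_notMem_of_lt hκ hIio (e := fun i => (e i : Set α))
    (fun i => hMκ _ (e i).2)
    (fun i j hij => had (e i).2 (e j).2 (Subtype.coe_injective.ne (e.injective.ne hij)))
  have hle : ∀ i j, y j ∈ (e i : Set α) → j ≤ i := fun i j h =>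
    not_lt.mp fun hij => (hy j).2 i hij h
  have hinj : Injective y := fun i j h =>
    le_antisymm (hle j i (h ▸ (hy j).1)) (hle i j (h ▸ (hy i).1))
  refine ⟨range y, by simp [mk_range_eq y hinj], fun P hP => ?_⟩
  obtain ⟨i, hi⟩ := e.surjective ⟨P, hP⟩
  obtain rfl : (e i : Set α) = P := congrArg Subtype.val hi
  calc #(range y ∩ e i : Set α) ≤ #(y '' Iic i) :=
        mk_le_mk_of_subset fun _ ⟨⟨j, hj⟩, hji⟩ => ⟨j, hle i j (hj ▸ hji), hj⟩
    _ ≤ #(Iic i) := mk_image_le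
    _ = #(insert i (Iio i) : Set κ.ord.ToType) := by rw [Iio_insert]
    _ ≤ #(Iio i) + 1 := mk_insert_le
    _ < κ := add_lt_of_lt hκ.le (hIio i) (one_lt_aleph0.trans hκ)

end AlmostDisjoint

-- Instance search does not find this on its own.
instance : PolishSpace Cantor where

theorem marczewskiNull_of_forall_mk_inter_lt {M : Set (Set Cantor)} (hMc : ∀ Q ∈ M, IsClosed Q)
    (hM : ∀ P, PerfectSet P → ∃ Q ∈ M, ¬(P ∩ Q).Countable) {Y : Set Cantor}
    (hY : ∀ Q ∈ M, #(Y ∩ Q : Set Cantor) < 𝔠) : MarczewskiNull Y := by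
  intro P hP
  obtain ⟨Q, hQM, hPQ⟩ := hM P hP
  obtain ⟨R, hR, hRne, hRPQ, hRY⟩ :=
    (hP.1.closed.inter (hMc Q hQM)).exists_perfect_subset_disjoint_of_mk_lt hPQ (hY Q hQM)
  refine ⟨R, ⟨hR, hRne⟩, hRPQ.trans inter_subset_left, ?_⟩
  rw [← disjoint_iff_inter_eq_empty]
  exact disjoint_left.mpr fun x hxR hxY => disjoint_left.mp hRY hxR ⟨hxY, (hRPQ hxR).2⟩

theorem stmt2 : ∃ Y : Set Cantor, MarczewskiNull Y ∧ #Y = Cardinal.continuum := by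
  obtain ⟨M₀, hM₀card, hM₀S, hM₀⟩ := exists_almostDisjoint_family_continuum_le
    ((PerfectSpace.univ_perfect Cantor).not_countable univ_nonempty)
  obtain ⟨M, hM₀M, hMS, hMad, hMmax⟩ := exists_maximal_almostDisjoint (fun _ hC => hC.2) hM₀S hM₀
  have hMcard : #M = 𝔠 := le_antisymm
    ((mk_le_mk_of_subset fun C hC => (hMS hC).1).trans mk_setOf_isClosed_le_continuum)
    (hM₀card.trans (mk_le_mk_of_subset hM₀M))
  obtain ⟨Y, hYcard, hY⟩ := exists_mk_eq_forall_mk_inter_lt aleph0_lt_continuum hMcard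
    (fun P hP => (hMS hP).1.continuum_le_mk (hMS hP).2) hMad
  exact ⟨Y, marczewskiNull_of_forall_mk_inter_lt (fun Q hQ => (hMS hQ).1)
    (fun P hP => hMmax P ⟨hP.1.closed, hP.1.not_countable hP.2⟩) hY, hYcard⟩
end

section
/- If p is a skew perfect tree in 2^{<ω} and t ∈ 2^ω is nonzero, then [p] ∩ ([p] + t) has at most 2 elements; in particular the perfect trees p and p + t are incompatible in Sacks forcing. -/
open Cardinal

/- auxiliary lemmas -/

lemma cAdd_cAdd (x t : Cantor) : cAdd (cAdd x t) t = x := by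
  funext n; simp [cAdd]

lemma seg_eq_iff (x y : Cantor) (n : ℕ) : seg x n = seg y n ↔ ∀ i < n, x i = y i := by
  simp [seg, List.ofFn_inj, funext_iff, Fin.forall_iff]

lemma seg_succ (x : Cantor) (n : ℕ) : seg x (n+1) = seg x n ++ [x n] := by
  simp only [seg, List.ofFn_succ', List.concat_eq_append, Fin.coe_castSucc, Fin.val_last]

lemma seg_len (x : Cantor) (n : ℕ) : (seg x n).length = n := by simp [seg]

lemma shiftNode_seg (t w : Cantor) (n : ℕ) : shiftNode t (seg w n) = seg (cAdd w t) n := by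
  apply List.ext_getElem <;> simp [shiftNode, seg, cAdd]

lemma shiftNode_shiftNode (t : Cantor) (σ : List Bool) : shiftNode t (shiftNode t σ) = σ := by
  apply List.ext_getElem <;> simp [shiftNode]

lemma splits_of_firstdiff {p : Set (List Bool)} {x y : Cantor} (hx : x ∈ body p)
    (hy : y ∈ body p) {m : ℕ} (hlt : ∀ i < m, x i = y i) (hm : x m ≠ y m) :
    Splits p (seg x m) := by
  have hxy : seg x m = seg y m := (seg_eq_iff x y m).2 hlt
  have h1 : seg x m ++ [x m] ∈ p := by rw [← seg_succ]; exact hx (m+1)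
  have h2 : seg x m ++ [y m] ∈ p := by rw [hxy, ← seg_succ]; exact hy (m+1)
  have hcase : (x m = false ∧ y m = true) ∨ (x m = true ∧ y m = false) := by
    cases hx' : x m <;> cases hy' : y m <;> simp_all
  rcases hcase with ⟨ha, hb⟩ | ⟨ha, hb⟩
  · exact ⟨by rwa [ha] at h1, by rwa [hb] at h2⟩
  · exact ⟨by rwa [hb] at h2, by rwa [ha] at h1⟩

lemma skew_seg_eq {p : Set (List Bool)} (hskew : SkewT p) {x z : Cantor}
    (hx : x ∈ body p) (hz : z ∈ body p) {m : ℕ}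
    (hsx : Splits p (seg x m)) (hsz : Splits p (seg z m)) :
    ∀ i < m, x i = z i := by
  have := hskew _ (hx m) _ (hz m) hsx hsz (by simp [seg_len])
  exact (seg_eq_iff x z m).1 this

lemma bool_xor_move {a b c : Bool} (h : a = xor b c) : xor a c = b := by
  subst h; cases b <;> cases c <;> rfl

lemma key {p : Set (List Bool)} (hskew : SkewT p) {t : Cantor}
    (ht : t ≠ fun _ => false) {x y : Cantor} (hx : x ∈ body p) (hxt : cAdd x t ∈ body p)
    (hy : y ∈ body p) (hyt : cAdd y t ∈ body p) (hxy : x ≠ y) : y = cAdd x t := by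
  by_contra hne
  -- first position where t is true
  have ht' : ∃ n, t n = true := by
    by_contra h
    push_neg at h
    exact ht (funext fun n => by simpa using h n)
  set n := Nat.find ht' with hn_def
  have hn : t n = true := Nat.find_spec ht'
  have hnmin : ∀ i < n, t i = false := fun i hi => by
    have := Nat.find_min ht' hi; simpa using this
  -- first difference of x and y
  have hxy' : ∃ m, x m ≠ y m := by
    by_contra h
    push_neg at h
    exact hxy (funext h)
  set m := Nat.find hxy' with hm_def
  have hm : x m ≠ y m := Nat.find_spec hxy'
  have hmmin : ∀ i < m, x i = y i := fun i hi => by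
    have := Nat.find_min hxy' hi; simpa using this
  -- the splitting nodes at level m
  have s1 : Splits p (seg x m) := splits_of_firstdiff hx hy hmmin hm
  have s2 : Splits p (seg (cAdd x t) m) :=
    splits_of_firstdiff hxt hyt
      (fun i hi => by simp [cAdd, hmmin i hi])
      (by simp only [cAdd]; revert hm; cases t m <;> cases x m <;> cases y m <;> simp)
  have tzero : ∀ i < m, t i = false := by
    intro i hi
    have h3 : x i = xor (x i) (t i) := skew_seg_eq hskew hx hxt s1 s2 i hi
    revert h3
    cases x i <;> cases t i <;> simp
  have hmn : m ≤ n := by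
    by_contra h
    push_neg at h
    exact absurd hn (by simp [tzero n h])
  rcases lt_or_eq_of_le hmn with hlt | heq
  · -- case m < n : splitting nodes of x,x+t and y,y+t at level n coincide
    have s3 : Splits p (seg x n) :=
      splits_of_firstdiff hx hxt
        (fun i hi => by simp [cAdd, hnmin i hi])
        (by simp [cAdd, hn])
    have s4 : Splits p (seg y n) :=
      splits_of_firstdiff hy hyt
        (fun i hi => by simp [cAdd, hnmin i hi])
        (by simp [cAdd, hn])
    exact hm (skew_seg_eq hskew hx hy s3 s4 m hlt)
  · -- case m = n : t m = true
    have htm : t m = true := by rw [heq]; exact hn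
    have hne' : ∃ k, x k ≠ cAdd y t k := by
      by_contra h
      push_neg at h
      exact hne (by rw [funext h, cAdd_cAdd])
    set k := Nat.find hne' with hk_def
    have hk : x k ≠ cAdd y t k := Nat.find_spec hne'
    have hkmin : ∀ i < k, x i = cAdd y t i := fun i hi => by
      have := Nat.find_min hne' hi; simpa using this
    have hmk : m < k := by
      rcases lt_or_ge m k with h | h
      · exact h
      · -- k ≤ m : contradiction with agreement up to (and at) m
        rcases lt_or_eq_of_le h with h' | h'
        · exact absurd (by simp [cAdd, tzero k h', hmmin k h']) hk
        · refine absurd ?_ hk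
          rw [h']
          simp only [cAdd, htm]
          revert hm
          cases x m <;> cases y m <;> simp
    have s5 : Splits p (seg x k) := splits_of_firstdiff hx hyt hkmin hk
    have s6 : Splits p (seg (cAdd x t) k) :=
      splits_of_firstdiff hxt hy
        (fun i hi => bool_xor_move (hkmin i hi))
        (by intro h
            apply hk
            simp only [cAdd] at h ⊢
            exact (bool_xor_move h.symm).symm)
    have h4 : x m = xor (x m) (t m) := skew_seg_eq hskew hx hxt s5 s6 m hmk
    rw [htm] at h4
    revert h4
    cases x m <;> simp

lemma mem_image_cAdd (B : Set Cantor) (t z : Cantor) :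
    z ∈ (fun x => cAdd x t) '' B ↔ cAdd z t ∈ B := by
  constructor
  · rintro ⟨w, hw, rfl⟩; rwa [cAdd_cAdd]
  · intro h; exact ⟨cAdd z t, h, cAdd_cAdd z t⟩

lemma prefix_getD {l l' : List Bool} (h : l <+: l') {n : ℕ} (hn : n < l.length) :
    l'.getD n false = l.getD n false := by
  obtain ⟨s, rfl⟩ := h
  rw [List.getD_eq_getElem _ _ hn, List.getD_eq_getElem _ _ (by simp; omega),
      List.getElem_append_left]

lemma exists_branch {r : Set (List Bool)} (hr : PerfTree r) {σ : List Bool} (hσ : σ ∈ r) :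
    ∃ x, x ∈ body r ∧ seg x σ.length = σ := by
  have next : ∀ τ ∈ r, ∃ τ', τ' ∈ r ∧ τ <+: τ' ∧ τ.length < τ'.length := by
    intro τ hτ
    obtain ⟨ρ, hρ, hpre, hsp⟩ := hr.2.2 τ hτ
    refine ⟨ρ ++ [false], hsp.1, hpre.trans (List.prefix_append ρ [false]), ?_⟩
    have := hpre.length_le
    simp; omega
  choose f hf1 hf2 hf3 using next
  let c : ℕ → {τ : List Bool // τ ∈ r} :=
    fun n => Nat.rec ⟨σ, hσ⟩ (fun _ τ => ⟨f τ.1 τ.2, hf1 τ.1 τ.2⟩) n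
  have hstep : ∀ a, (c a).1 <+: (c (a+1)).1 := fun a => hf2 (c a).1 (c a).2
  have hmono : ∀ a b, a ≤ b → (c a).1 <+: (c b).1 := by
    intro a b hab
    induction b with
    | zero => simp_all
    | succ b ih =>
      rcases Nat.lt_or_ge a (b+1) with h | h
      · exact (ih (Nat.lt_succ_iff.1 h)).trans (hstep b)
      · have : a = b + 1 := le_antisymm hab h
        subst this; rfl
  have hlen : ∀ a, a ≤ (c a).1.length := by
    intro a
    induction a with
    | zero => omega
    | succ a ih =>
      have h2 : (c a).1.length < (c (a+1)).1.length := hf3 (c a).1 (c a).2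
      omega
  set x : Cantor := fun i => (c (i+1)).1.getD i false with hx_def
  have hx_val : ∀ a i, i < a → x i = (c a).1.getD i false := by
    intro a i hia
    have h1 : (c (i+1)).1 <+: (c a).1 := hmono _ _ hia
    have h2 : i < (c (i+1)).1.length := lt_of_lt_of_le (Nat.lt_succ_self i) (hlen (i+1))
    exact (prefix_getD h1 h2).symm
  have hseg : ∀ a, seg x a = (c a).1.take a := by
    intro a
    apply List.ext_getElem
    · have := hlen a; simp [seg_len]; omega
    · intro i hi1 hi2
      have hia : i < a := by simpa [seg_len] using hi1
      have hilen : i < (c a).1.length := lt_of_lt_of_le hia (hlen a)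
      simp only [seg, List.getElem_ofFn, List.getElem_take]
      rw [hx_val a i hia, List.getD_eq_getElem _ _ hilen]
  refine ⟨x, fun a => ?_, ?_⟩
  · rw [hseg a]
    exact hr.2.1 _ (c a).2 _ (List.take_prefix a _)
  · rw [hseg σ.length]
    have hpre : σ <+: (c σ.length).1 := hmono 0 σ.length (Nat.zero_le _)
    obtain ⟨s, hs⟩ := hpre
    rw [← hs, List.take_left]

lemma seg_getD {w : Cantor} {ρ : List Bool} (h : seg w ρ.length = ρ) {i : ℕ}
    (hi : i < ρ.length) : w i = ρ.getD i false := by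
  have h2 := congrArg (fun l => l.getD i false) h
  rw [← h2, List.getD_eq_getElem _ _ (by simpa [seg_len] using hi)]
  simp [seg]

lemma three_branches {r : Set (List Bool)} (hr : PerfTree r) :
    ∃ x y z, x ∈ body r ∧ y ∈ body r ∧ z ∈ body r ∧ x ≠ y ∧ x ≠ z ∧ y ≠ z := by
  obtain ⟨σ₀, hσ₀⟩ := hr.1
  obtain ⟨τ₀, hτ₀, _, hs₀⟩ := hr.2.2 σ₀ hσ₀
  obtain ⟨τ₁, hτ₁, hpre₁, hs₁⟩ := hr.2.2 (τ₀ ++ [false]) hs₀.1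
  have hlen01 : τ₀.length < τ₁.length := by
    have := hpre₁.length_le; simp at this; omega
  obtain ⟨x, hx, hxs⟩ := exists_branch hr hs₀.2
  obtain ⟨y, hy, hys⟩ := exists_branch hr hs₁.1
  obtain ⟨z, hz, hzs⟩ := exists_branch hr hs₁.2
  have hx0 : x τ₀.length = true := by
    have := seg_getD hxs (i := τ₀.length) (by simp)
    simpa [List.getD_append_right, List.getD_eq_getElem] using this
  have hτ1bit : τ₁.getD τ₀.length false = false := by
    have := prefix_getD hpre₁ (n := τ₀.length) (by simp)
    simpa [List.getD_append_right] using this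
  have hy0 : y τ₀.length = false := by
    have h := seg_getD hys (i := τ₀.length) (by simp; omega)
    rwa [List.getD_append _ _ _ _ hlen01, hτ1bit] at h
  have hz0 : z τ₀.length = false := by
    have h := seg_getD hzs (i := τ₀.length) (by simp; omega)
    rwa [List.getD_append _ _ _ _ hlen01, hτ1bit] at h
  have hy1 : y τ₁.length = false := by
    have := seg_getD hys (i := τ₁.length) (by simp)
    simpa [List.getD_append_right] using this
  have hz1 : z τ₁.length = true := by
    have := seg_getD hzs (i := τ₁.length) (by simp)
    simpa [List.getD_append_right] using this
  exact ⟨x, y, z, hx, hy, hz,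
    fun h => by rw [h] at hx0; simp_all,
    fun h => by rw [h] at hx0; simp_all,
    fun h => by rw [h] at hy1; simp_all⟩

theorem stmt4 (p : Set (List Bool)) (hp : PerfTree p) (hskew : SkewT p)
    (t : Cantor) (ht : t ≠ fun _ => false) :
    (body p ∩ ((fun x => cAdd x t) '' body p)).encard ≤ 2 ∧
      ¬ ∃ r, PerfTree r ∧ r ⊆ p ∧ r ⊆ treeAdd p t := by
  have hS : ∀ z, z ∈ body p ∩ ((fun x => cAdd x t) '' body p) ↔
      z ∈ body p ∧ cAdd z t ∈ body p := by
    intro z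
    rw [Set.mem_inter_iff, mem_image_cAdd]
  constructor
  · rcases Set.eq_empty_or_nonempty (body p ∩ ((fun x => cAdd x t) '' body p)) with h | ⟨x₀, hx₀⟩
    · simp [h]
    · have hsub : body p ∩ ((fun x => cAdd x t) '' body p) ⊆ {x₀, cAdd x₀ t} := by
        intro z hz
        obtain ⟨hz1, hz2⟩ := (hS z).1 hz
        obtain ⟨h1, h2⟩ := (hS x₀).1 hx₀
        rcases eq_or_ne x₀ z with h | h
        · exact Or.inl h.symm
        · exact Or.inr (key hskew ht h1 h2 hz1 hz2 h)
      calc (body p ∩ ((fun x => cAdd x t) '' body p)).encard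
          ≤ ({x₀, cAdd x₀ t} : Set Cantor).encard := Set.encard_mono hsub
        _ ≤ 2 := (Set.encard_insert_le _ _).trans (by rw [Set.encard_singleton]; exact le_of_eq one_add_one_eq_two)
  · rintro ⟨r, hr, hrp, hrt⟩
    -- every branch of r lies in body p and its shift lies in body p
    have hbp : ∀ w ∈ body r, w ∈ body p := fun w hw n => hrp (hw n)
    have hbpt : ∀ w ∈ body r, cAdd w t ∈ body p := by
      intro w hw n
      obtain ⟨σ, hσ, hshift⟩ := hrt (hw n)
      have : σ = seg (cAdd w t) n := by
        rw [← shiftNode_shiftNode t σ, hshift, shiftNode_seg]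
      rwa [← this]
    obtain ⟨x, y, z, hx, hy, hz, hxy, hxz, hyz⟩ := three_branches hr
    have h1 : y = cAdd x t := key hskew ht (hbp x hx) (hbpt x hx) (hbp y hy) (hbpt y hy) hxy
    have h2 : z = cAdd x t := key hskew ht (hbp x hx) (hbpt x hx) (hbp z hz) (hbpt z hz) hxz
    exact hyz (h1.trans h2.symm)
end

section
/- Let S, T be perfect subtrees of 2^{<ω}. If the function h_S is not eventually dominated by f_T (i.e., h_S(n) > f_T(n) for infinitely many n), then S is nowhere dense in T: there is no s ∈ T with T_s ⊆ S. -/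
open Cardinal

noncomputable def splitPredCount (T : Set (List Bool)) (s : List Bool) : ℕ :=
  {τ : List Bool | τ <+: s ∧ τ ≠ s ∧ Splits T τ}.ncard

noncomputable def hFn (T : Set (List Bool)) (n : ℕ) : ℕ :=
  sInf {k | ∃ s ∈ T, s.length = k ∧ n ≤ splitPredCount T s}

noncomputable def fFn (T : Set (List Bool)) (n : ℕ) : ℕ :=
  sInf {k | ∀ s ∈ T, s.length = k → 2 * n ≤ splitPredCount T s}


section Aux
variable {T : Set (List Bool)}

lemma prefix_comparable {l1 l2 t : List Bool} (h1 : l1 <+: t) (h2 : l2 <+: t) :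
    l1 <+: l2 ∨ l2 <+: l1 := by
  rcases le_total l1.length l2.length with h | h
  · left
    rw [List.prefix_iff_eq_take.mp h1, List.prefix_iff_eq_take.mp h2]
    exact (List.take_isPrefix_take (l := t)).mpr (Or.inl h)
  · right
    rw [List.prefix_iff_eq_take.mp h1, List.prefix_iff_eq_take.mp h2]
    exact (List.take_isPrefix_take (l := t)).mpr (Or.inl h)

lemma prefixSet_subset (t : List Bool) (P : List Bool → Prop) :
    {τ | τ <+: t ∧ τ ≠ t ∧ P τ} ⊆ (fun i => t.take i) '' (Set.Iio t.length) := by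
  rintro τ ⟨h1, h2, _⟩
  refine ⟨τ.length, ?_, (List.prefix_iff_eq_take.mp h1).symm⟩
  exact lt_of_le_of_ne h1.length_le (fun he => h2 (h1.eq_of_length he))

lemma prefixSet_finite (t : List Bool) (P : List Bool → Prop) :
    {τ | τ <+: t ∧ τ ≠ t ∧ P τ}.Finite :=
  (Set.Finite.image _ (Set.finite_Iio _)).subset (prefixSet_subset t P)

lemma prefixSet_ncard_le (t : List Bool) (P : List Bool → Prop) :
    {τ | τ <+: t ∧ τ ≠ t ∧ P τ}.ncard ≤ t.length := by
  have h1 := Set.ncard_le_ncard (prefixSet_subset t P) (Set.Finite.image _ (Set.finite_Iio _))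
  have h2 := Set.ncard_image_le (s := Set.Iio t.length) (f := fun i => t.take i)
    (Set.finite_Iio _)
  have h3 : (Set.Iio t.length).ncard = t.length := by
    rw [Set.ncard_eq_toFinset_card' (Set.Iio t.length)]
    simp
  omega

lemma splitPredCount_le_length (t : List Bool) : splitPredCount T t ≤ t.length :=
  prefixSet_ncard_le t _

lemma nil_mem_tree (hT : PerfTree T) : [] ∈ T := by
  obtain ⟨⟨σ, hσ⟩, htree, _⟩ := hT
  exact htree σ hσ [] List.nil_prefix

lemma exists_ext (hT : PerfTree T) : ∀ σ ∈ T, ∀ m, σ.length ≤ m →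
    ∃ t ∈ T, σ <+: t ∧ t.length = m := by
  obtain ⟨hne, htree, hperf⟩ := hT
  intro σ hσ m hm
  -- first get a long extension
  have key : ∀ k, ∃ t ∈ T, σ <+: t ∧ σ.length + k ≤ t.length := by
    intro k
    induction k with
    | zero => exact ⟨σ, hσ, List.prefix_refl σ, le_refl _⟩
    | succ k ih =>
      obtain ⟨t, ht, hst, hlen⟩ := ih
      obtain ⟨τ, hτ, htτ, hsp⟩ := hperf t ht
      refine ⟨τ ++ [true], hsp.2, hst.trans (htτ.trans (List.prefix_append _ _)), ?_⟩
      have := htτ.length_le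
      simp only [List.length_append, List.length_singleton]
      omega
  obtain ⟨t, ht, hst, hlen⟩ := key (m - σ.length)
  refine ⟨t.take m, htree t ht _ (List.take_prefix m t), ?_, ?_⟩
  · exact List.prefix_take_iff.mpr ⟨hst, hm⟩
  · simp; omega

/-- Above any node `t`, there's a level past which every extension has a splitting
node strictly between. -/
lemma exists_unif_split (hT : PerfTree T) (t : List Bool) (ht : t ∈ T) :
    ∃ m, t.length < m ∧ ∀ t' ∈ T, t <+: t' → m ≤ t'.length →
      ∃ τ, t <+: τ ∧ τ <+: t' ∧ τ ≠ t' ∧ Splits T τ := by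
  obtain ⟨hne, htree, hperf⟩ := hT
  obtain ⟨τ₀, hτ₀, htτ₀, hsp₀⟩ := hperf t ht
  refine ⟨τ₀.length + 1, by have := htτ₀.length_le; omega, ?_⟩
  intro t' ht' htt' hlen
  by_cases hcase : τ₀ <+: t'
  · exact ⟨τ₀, htτ₀, hcase, fun he => by subst he; omega, hsp₀⟩
  · -- longest common prefix argument
    set P : ℕ → Prop := fun i => τ₀.take i = t'.take i with hP
    have hP0 : P 0 := by simp [hP]
    set j := Nat.findGreatest P τ₀.length with hj
    have hjle : j ≤ τ₀.length := Nat.findGreatest_le _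
    have hjP : P j := Nat.findGreatest_spec (Nat.zero_le _) hP0
    have hjlt : j < τ₀.length := by
      rcases lt_or_eq_of_le hjle with h | h
      · exact h
      · exfalso
        apply hcase
        rw [List.prefix_iff_eq_take]
        have : τ₀.take τ₀.length = t'.take τ₀.length := by rw [← h]; exact hjP
        simpa using this
    have hjlt' : j < t'.length := hjlt.trans (Nat.lt_of_succ_le hlen)
    -- maximality: taking one more differs
    have hne1 : ¬ P (j + 1) := Nat.findGreatest_is_greatest (n := τ₀.length) (by omega) (by omega)
    have hget : τ₀[j]'hjlt ≠ t'[j]'hjlt' := by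
      intro he
      apply hne1
      show τ₀.take (j+1) = t'.take (j+1)
      rw [← List.take_concat_get' τ₀ j hjlt, ← List.take_concat_get' t' j hjlt', he, hjP]
    set ρ := t'.take j with hρ
    have hρt' : ρ ++ [t'[j]'hjlt'] = t'.take (j+1) := List.take_concat_get' t' j hjlt'
    have hρτ₀ : ρ ++ [τ₀[j]'hjlt] = τ₀.take (j+1) := by
      rw [hρ, ← hjP]; exact List.take_concat_get' τ₀ j hjlt
    have hmem1 : ρ ++ [t'[j]'hjlt'] ∈ T := by
      rw [hρt']; exact htree t' ht' _ (List.take_prefix _ _)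
    have hmem2 : ρ ++ [τ₀[j]'hjlt] ∈ T := by
      rw [hρτ₀]; exact htree τ₀ hτ₀ _ (List.take_prefix _ _)
    have hsplits : Splits T ρ := by
      rcases hb : t'[j]'hjlt' with _ | _
      · rcases hb' : τ₀[j]'hjlt with _ | _
        · exact absurd (hb'.trans hb.symm) hget
        · exact ⟨by rwa [hb] at hmem1, by rwa [hb'] at hmem2⟩
      · rcases hb' : τ₀[j]'hjlt with _ | _
        · exact ⟨by rwa [hb'] at hmem2, by rwa [hb] at hmem1⟩
        · exact absurd (hb'.trans hb.symm) hget
    have htρ : t <+: ρ := by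
      have hjge : t.length ≤ j := by
        apply Nat.le_findGreatest htτ₀.length_le
        show τ₀.take t.length = t'.take t.length
        rw [← List.prefix_iff_eq_take.mp htτ₀, ← List.prefix_iff_eq_take.mp htt']
      exact List.prefix_take_iff.mpr ⟨htt', hjge⟩
    refine ⟨ρ, htρ, List.take_prefix _ _, ?_, hsplits⟩
    intro he
    have hlenρ : ρ.length = j := by simp [hρ]; omega
    rw [he] at hlenρ
    omega

lemma splitPredCount_lt (htree : IsTree T) {t t' τ : List Bool} (ht' : t' ∈ T)
    (htτ : t <+: τ) (hττ' : τ <+: t') (hneτ : τ ≠ t') (hsp : Splits T τ) :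
    splitPredCount T t < splitPredCount T t' := by
  unfold splitPredCount
  set A := {τ' : List Bool | τ' <+: t ∧ τ' ≠ t ∧ Splits T τ'} with hA
  set B := {τ' : List Bool | τ' <+: t' ∧ τ' ≠ t' ∧ Splits T τ'} with hB
  have htt' : t <+: t' := htτ.trans hττ'
  have hsub : insert τ A ⊆ B := by
    rintro τ' (rfl | ⟨h1, h2, h3⟩)
    · exact ⟨hττ', hneτ, hsp⟩
    · refine ⟨h1.trans htt', ?_, h3⟩
      intro he; subst he
      have h4 := h1.length_le
      have h5 := htt'.length_le
      have : τ'.length = t.length := le_antisymm h4 (by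
        have := htt'.length_le; omega)
      exact h2 (h1.eq_of_length this)
  have hτA : τ ∉ A := by
    rintro ⟨h1, h2, _⟩
    have := h1.length_le
    have := htτ.length_le
    exact h2 (h1.eq_of_length (by omega))
  have hfinA : A.Finite := prefixSet_finite t _
  have hfinB : B.Finite := prefixSet_finite t' _
  have h1 : (insert τ A).ncard = A.ncard + 1 := Set.ncard_insert_of_notMem hτA hfinA
  have h2 : (insert τ A).ncard ≤ B.ncard := Set.ncard_le_ncard hsub hfinB
  omega

lemma exists_level (hT : PerfTree T) (n : ℕ) :
    ∃ m, ∀ t ∈ T, t.length = m → n ≤ splitPredCount T t := by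
  induction n with
  | zero => exact ⟨0, fun t _ _ => Nat.zero_le _⟩
  | succ n ih =>
    obtain ⟨m, hm⟩ := ih
    have hchoice : ∀ t : List Bool, ∃ m', (t ∈ T → (t.length < m' ∧
        ∀ t' ∈ T, t <+: t' → m' ≤ t'.length →
          ∃ τ, t <+: τ ∧ τ <+: t' ∧ τ ≠ t' ∧ Splits T τ)) := by
      intro t
      by_cases ht : t ∈ T
      · obtain ⟨m', h1, h2⟩ := exists_unif_split hT t ht
        exact ⟨m', fun _ => ⟨h1, h2⟩⟩
      · exact ⟨0, fun h => absurd h ht⟩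
    choose g hg using hchoice
    have hLfin : ({t : List Bool | t.length = m}).Finite := List.finite_length_eq _ _
    obtain ⟨M, hM⟩ := (hLfin.image g).bddAbove
    refine ⟨max m M + 1, ?_⟩
    intro t'' ht'' hlen
    set t := t''.take m with htdef
    have htmem : t ∈ T := hT.2.1 t'' ht'' _ (List.take_prefix _ _)
    have htlen : t.length = m := by simp [htdef]; omega
    have hgle : g t ≤ M := hM ⟨t, htlen, rfl⟩
    obtain ⟨hlt, hspec⟩ := hg t htmem
    obtain ⟨τ, h1, h2, h3, h4⟩ := hspec t'' ht'' (List.take_prefix _ _) (by omega)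
    have := splitPredCount_lt hT.2.1 ht'' h1 h2 h3 h4
    have := hm t htmem htlen
    omega

end Aux


theorem stmt18 (S T : Set (List Bool)) (hS : PerfTree S) (hT : PerfTree T)
    (hdom : ∀ N : ℕ, ∃ n ≥ N, fFn T n < hFn S n) :
    ∀ s ∈ T, ¬ ({t | t ∈ T ∧ (t <+: s ∨ s <+: t)} ⊆ S) := by
  intro s hs hsub
  obtain ⟨n, hn, hflt⟩ := hdom (s.length + 1)
  -- the fFn set is nonempty
  obtain ⟨m, hmlev⟩ := exists_level hT (2 * n)
  have hmem : m ∈ {k | ∀ t ∈ T, t.length = k → 2 * n ≤ splitPredCount T t} := hmlev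
  have hkmem : fFn T n ∈ {k | ∀ t ∈ T, t.length = k → 2 * n ≤ splitPredCount T t} :=
    Nat.sInf_mem ⟨m, hmem⟩
  set k := fFn T n with hk
  -- some node of length k exists, so k ≥ 2n
  obtain ⟨u, hu, _, hulen⟩ := exists_ext hT [] (nil_mem_tree hT) k (Nat.zero_le _)
  have hku : 2 * n ≤ splitPredCount T u := hkmem u hu hulen
  have hk2n : 2 * n ≤ k := le_trans hku (hulen ▸ splitPredCount_le_length u)
  have hsk : s.length ≤ k := by omega
  -- a node t ⊇ s of length k
  obtain ⟨t, ht, hst, htlen⟩ := exists_ext hT s hs k hsk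
  have htS : t ∈ S := hsub ⟨ht, Or.inr hst⟩
  -- count splitting predecessors in S
  set A := {τ : List Bool | τ <+: t ∧ τ ≠ t ∧ Splits T τ} with hA
  set A' := {τ : List Bool | τ <+: t ∧ τ ≠ t ∧ Splits S τ} with hA'
  have hcardA : 2 * n ≤ A.ncard := hkmem t ht htlen
  set P := {τ : List Bool | s <+: τ} with hP
  have hsub1 : A ∩ P ⊆ A' := by
    rintro τ ⟨⟨h1, h2, h3⟩, hsp⟩
    refine ⟨h1, h2, ?_, ?_⟩
    · exact hsub ⟨h3.1, Or.inr (hsp.trans (List.prefix_append _ _))⟩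
    · exact hsub ⟨h3.2, Or.inr (hsp.trans (List.prefix_append _ _))⟩
  have hsub2 : A \ P ⊆ {τ : List Bool | τ <+: s ∧ τ ≠ s ∧ True} := by
    rintro τ ⟨⟨h1, h2, h3⟩, hnp⟩
    rcases prefix_comparable h1 hst with h | h
    · refine ⟨h, ?_, trivial⟩
      rintro rfl
      exact hnp (List.prefix_refl τ)
    · exact absurd h hnp
  have hd : (A \ P).ncard ≤ s.length :=
    le_trans (Set.ncard_le_ncard hsub2 (prefixSet_finite s _)) (prefixSet_ncard_le s _)
  have hcover : A ⊆ (A ∩ P) ∪ (A \ P) := by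
    intro τ hτ
    by_cases h : τ ∈ P
    · exact Or.inl ⟨hτ, h⟩
    · exact Or.inr ⟨hτ, h⟩
  have hfinAP : (A ∩ P).Finite := (prefixSet_finite t _).subset Set.inter_subset_left
  have hfinAD : (A \ P).Finite := (prefixSet_finite t _).subset Set.diff_subset
  have hsplit : A.ncard ≤ (A ∩ P).ncard + (A \ P).ncard :=
    le_trans (Set.ncard_le_ncard hcover (hfinAP.union hfinAD)) (Set.ncard_union_le _ _)
  have hAP : n ≤ (A ∩ P).ncard := by omega
  have hA'card : n ≤ A'.ncard :=
    le_trans hAP (Set.ncard_le_ncard hsub1 (prefixSet_finite t _))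
  -- so hFn S n ≤ k
  have : hFn S n ≤ k := Nat.sInf_le ⟨t, htS, htlen, hA'card⟩
  omega
end
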